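/- arXiv:1010.3368 — 2 statements merged into one kernel-verified Lean document; each statement's English description precedes it below -/
import Mathlib

section
/- Let (X,d) be a metric space and 𝔅 a bornology on X with closed base. If X satisfies S₁(𝒪_{𝔅^s},𝒪_{𝔅^s}), then C(X,ℝ) with the topology τ^s_𝔅 of strong uniform convergence on 𝔅 has countable strong fan tightness. -/
/-!
For fixed `η > 0`, the sets `{x | |h x - f x| < η}` with `h ∈ Aₙ` form a 𝔅ˢ-cover (they can only
fail to, by containing `X`, when some `h ∈ Aₙ` is uniformly `η`-close to `f`, and then that `h`
alone does the job). Applying `S₁(𝒪_{𝔅ˢ}, 𝒪_{𝔅ˢ})` to these covers selects `hₙ ∈ Aₙ` such that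
every `B ∈ 𝔅` has an enlargement on which some `hₙ` is `η`-close to `f`. Running this for
`η = 1/(m+1)` on the disjoint subsequences `n = Nat.pair m k` yields a single selection that
works for every `η`.
-/

open Set Metric

variable {X : Type*} [MetricSpace X]

/-- The δ-enlargement of a set `B`: union of open δ-balls around points of `B`. -/
def enl (B : Set X) (δ : ℝ) : Set X := ⋃ b ∈ B, Metric.ball b δ

/-- A bornology (in the sense of Hu/Hogbe-Nlend): a family of nonempty subsets
covering `X`, closed under finite unions and hereditary. -/
def IsBorn (𝔅 : Set (Set X)) : Prop :=
  (∀ B ∈ 𝔅, B.Nonempty) ∧ (⋃₀ 𝔅 = Set.univ) ∧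
  (∀ B₁ ∈ 𝔅, ∀ B₂ ∈ 𝔅, B₁ ∪ B₂ ∈ 𝔅) ∧
  (∀ B ∈ 𝔅, ∀ A : Set X, A ⊆ B → A.Nonempty → A ∈ 𝔅)

/-- The bornology has a base consisting of closed sets. -/
def HasClosedBase (𝔅 : Set (Set X)) : Prop :=
  ∃ 𝔅₀ ⊆ 𝔅, (∀ B ∈ 𝔅₀, IsClosed B) ∧ ∀ B ∈ 𝔅, ∃ B₀ ∈ 𝔅₀, B ⊆ B₀

/-- A strong 𝔅-cover (𝔅ˢ-cover): an open cover 𝒰 of X with X ∉ 𝒰 such that for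
every `B ∈ 𝔅` some δ-enlargement of `B` lies in a member of 𝒰. -/
def IsBsCover (𝔅 : Set (Set X)) (𝒰 : Set (Set X)) : Prop :=
  (∀ U ∈ 𝒰, IsOpen U) ∧ Set.univ ∉ 𝒰 ∧ ⋃₀ 𝒰 = Set.univ ∧
  ∀ B ∈ 𝔅, ∃ U ∈ 𝒰, ∃ δ > 0, enl B δ ⊆ U

/-- A γ_{𝔅ˢ}-cover: an infinite countable open cover `(U n)` such that for every
`B ∈ 𝔅` there are `n₀` and positive reals `δ n` (for `n ≥ n₀`) with
`enl B (δ n) ⊆ U n` for all `n ≥ n₀`. -/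
def IsGammaCover (𝔅 : Set (Set X)) (U : ℕ → Set X) : Prop :=
  (∀ n, IsOpen (U n)) ∧ (⋃ n, U n) = Set.univ ∧ (Set.range U).Infinite ∧
  ∀ B ∈ 𝔅, ∃ n₀ : ℕ, ∃ δ : ℕ → ℝ, ∀ n ≥ n₀, 0 < δ n ∧ enl B (δ n) ⊆ U n

/-- `g` belongs to the basic τˢ_𝔅-neighborhood `[B,ε]ˢ(f)`. -/
def SNbhd (B : Set X) (ε : ℝ) (f g : C(X, ℝ)) : Prop :=
  ∃ δ > 0, ∀ x ∈ enl B δ, |g x - f x| < ε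

/-- `f` lies in the τˢ_𝔅-closure of `A`. -/
def SCl (𝔅 : Set (Set X)) (A : Set C(X, ℝ)) (f : C(X, ℝ)) : Prop :=
  ∀ B ∈ 𝔅, ∀ ε > 0, ∃ g ∈ A, SNbhd B ε f g

/-- The sequence `g` τˢ_𝔅-converges to `f`. -/
def SConv (𝔅 : Set (Set X)) (g : ℕ → C(X, ℝ)) (f : C(X, ℝ)) : Prop :=
  ∀ B ∈ 𝔅, ∀ ε > 0, ∃ N : ℕ, ∀ n ≥ N, SNbhd B ε f (g n)

/-- The selection principle `S₁(𝒪_{𝔅ˢ}, 𝒪_{𝔅ˢ})`. -/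
def HasS1BsCovers (𝔅 : Set (Set X)) : Prop :=
  ∀ 𝒰 : ℕ → Set (Set X), (∀ n, IsBsCover 𝔅 (𝒰 n)) →
    ∃ u : ℕ → Set X, (∀ n, u n ∈ 𝒰 n) ∧ IsBsCover 𝔅 (Set.range u)

def closeSet (f : C(X, ℝ)) (η : ℝ) (h : C(X, ℝ)) : Set X := {x | |h x - f x| < η}

theorem isOpen_closeSet (f h : C(X, ℝ)) (η : ℝ) : IsOpen (closeSet f η h) :=
  isOpen_lt (h.continuous.sub f.continuous).abs continuous_const

theorem mem_enl_of_mem {B : Set X} {x : X} {δ : ℝ} (hx : x ∈ B) (hδ : 0 < δ) : x ∈ enl B δ :=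
  mem_biUnion hx (mem_ball_self hδ)

theorem IsBorn.singleton_mem {α : Type*} {𝔅 : Set (Set α)} (h𝔅 : IsBorn 𝔅) (x : α) : {x} ∈ 𝔅 := by
  obtain ⟨-, hcov, -, hher⟩ := h𝔅
  obtain ⟨B, hB, hxB⟩ : x ∈ ⋃₀ 𝔅 := hcov ▸ mem_univ x
  exact hher B hB {x} (singleton_subset_iff.mpr hxB) (singleton_nonempty x)

theorem SNbhd.mono {B : Set X} {ε ε' : ℝ} {f g : C(X, ℝ)} (h : SNbhd B ε f g) (hε : ε ≤ ε') :
    SNbhd B ε' f g :=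
  let ⟨δ, hδ, hclose⟩ := h
  ⟨δ, hδ, fun x hx => (hclose x hx).trans_le hε⟩

theorem SCl.nonempty [Nonempty X] {𝔅 : Set (Set X)} (h𝔅 : IsBorn 𝔅) {A : Set C(X, ℝ)}
    {f : C(X, ℝ)} (hA : SCl 𝔅 A f) : A.Nonempty :=
  let ⟨g, hg, _⟩ := hA _ (h𝔅.singleton_mem (Classical.arbitrary X)) 1 one_pos
  ⟨g, hg⟩

/-- On an empty space `∅` would be a 𝔅ˢ-cover, from which nothing can be selected. -/
theorem HasS1BsCovers.nonempty {𝔅 : Set (Set X)} (hsel : HasS1BsCovers 𝔅)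
    (h𝔅 : ∀ B ∈ 𝔅, B.Nonempty) : Nonempty X := by
  by_contra hX
  rw [not_nonempty_iff] at hX
  have hempty : IsBsCover 𝔅 (∅ : Set (Set X)) :=
    ⟨fun _ hU => absurd hU (notMem_empty _), notMem_empty _,
      by rw [sUnion_empty, univ_eq_empty_iff.mpr hX],
      fun B hB => absurd (h𝔅 B hB) (not_nonempty_iff_eq_empty.mpr B.eq_empty_of_isEmpty)⟩
  obtain ⟨u, hu, -⟩ := hsel (fun _ => ∅) (fun _ => hempty)
  exact hu 0

theorem isBsCover_image_closeSet {𝔅 : Set (Set X)} (h𝔅 : IsBorn 𝔅) {A : Set C(X, ℝ)}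
    {f : C(X, ℝ)} (hA : SCl 𝔅 A f) {η : ℝ} (hη : 0 < η)
    (hfar : ∀ h ∈ A, ∃ x, η ≤ |h x - f x|) : IsBsCover 𝔅 (closeSet f η '' A) := by
  have hstrong : ∀ B ∈ 𝔅, ∃ U ∈ closeSet f η '' A, ∃ δ > 0, enl B δ ⊆ U := fun B hB =>
    let ⟨h, hh, δ, hδ, hclose⟩ := hA B hB η hη
    ⟨_, mem_image_of_mem _ hh, δ, hδ, hclose⟩
  refine ⟨?_, ?_, eq_univ_of_forall fun x => ?_, hstrong⟩
  · rintro _ ⟨h, -, rfl⟩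
    exact isOpen_closeSet f h η
  · rintro ⟨h, hh, hU⟩
    obtain ⟨x, hx⟩ := hfar h hh
    exact (hU ▸ mem_univ x : x ∈ closeSet f η h).not_ge hx
  · obtain ⟨U, hU, δ, hδ, hsub⟩ := hstrong {x} (h𝔅.singleton_mem x)
    exact ⟨U, hU, hsub (mem_enl_of_mem rfl hδ)⟩

theorem HasS1BsCovers.exists_selection_sNbhd {𝔅 : Set (Set X)} (hsel : HasS1BsCovers 𝔅)
    (h𝔅 : IsBorn 𝔅) {A : ℕ → Set C(X, ℝ)} {f : C(X, ℝ)} (hA : ∀ n, SCl 𝔅 (A n) f) {η : ℝ}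
    (hη : 0 < η) : ∃ g : ℕ → C(X, ℝ), (∀ n, g n ∈ A n) ∧ ∀ B ∈ 𝔅, ∃ n, SNbhd B η f (g n) := by
  have := hsel.nonempty h𝔅.1
  choose g₀ hg₀ using fun n => (hA n).nonempty h𝔅
  by_cases huniform : ∃ n, ∃ h ∈ A n, ∀ x, |h x - f x| < η
  · obtain ⟨n₀, h, hh, hclose⟩ := huniform
    refine ⟨Function.update g₀ n₀ h, fun n => ?_, fun B _ => ⟨n₀, 1, one_pos, fun x _ => ?_⟩⟩
    · rcases eq_or_ne n n₀ with rfl | hn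
      · simpa using hh
      · simpa [hn] using hg₀ n
    · simpa using hclose x
  · push Not at huniform
    obtain ⟨u, hu, -, -, -, hstrong⟩ :=
      hsel _ fun n => isBsCover_image_closeSet h𝔅 (hA n) hη (huniform n)
    choose g hg hgu using hu
    refine ⟨g, hg, fun B hB => ?_⟩
    obtain ⟨_, ⟨n, rfl⟩, δ, hδ, hsub⟩ := hstrong B hB
    exact ⟨n, δ, hδ, fun x hx => (hgu n ▸ hsub hx : x ∈ closeSet f η (g n))⟩

theorem statement12_general (𝔅 : Set (Set X)) (h𝔅 : IsBorn 𝔅)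
    (hsel : ∀ 𝒰 : ℕ → Set (Set X), (∀ n, IsBsCover 𝔅 (𝒰 n)) →
      ∃ u : ℕ → Set X, (∀ n, u n ∈ 𝒰 n) ∧ IsBsCover 𝔅 (Set.range u)) :
    ∀ f : C(X, ℝ), ∀ A : ℕ → Set C(X, ℝ), (∀ n, SCl 𝔅 (A n) f) →
      ∃ g : ℕ → C(X, ℝ), (∀ n, g n ∈ A n) ∧ SCl 𝔅 (Set.range g) f := by
  intro f A hA
  choose G hGA hGclose using fun m : ℕ =>
    HasS1BsCovers.exists_selection_sNbhd hsel h𝔅 (A := fun k => A (Nat.pair m k))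
      (fun k => hA _) (Nat.one_div_pos_of_nat (n := m))
  refine ⟨fun n => G n.unpair.1 n.unpair.2, fun n => ?_, fun B hB ε hε => ?_⟩
  · simpa using hGA n.unpair.1 n.unpair.2
  · obtain ⟨m, hm⟩ := exists_nat_one_div_lt hε
    obtain ⟨k, hk⟩ := hGclose m B hB
    exact ⟨G m k, ⟨Nat.pair m k, by simp⟩, hk.mono hm.le⟩

theorem statement12 (𝔅 : Set (Set X)) (h𝔅 : IsBorn 𝔅) (hcb : HasClosedBase 𝔅)
    (hsel : ∀ 𝒰 : ℕ → Set (Set X), (∀ n, IsBsCover 𝔅 (𝒰 n)) →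
      ∃ u : ℕ → Set X, (∀ n, u n ∈ 𝒰 n) ∧ IsBsCover 𝔅 (Set.range u)) :
    ∀ f : C(X, ℝ), ∀ A : ℕ → Set C(X, ℝ), (∀ n, SCl 𝔅 (A n) f) →
      ∃ g : ℕ → C(X, ℝ), (∀ n, g n ∈ A n) ∧ SCl 𝔅 (Set.range g) f :=
  statement12_general 𝔅 h𝔅 hsel
end

section
/- Let (X,d) be a metric space and 𝔅 a bornology on X with closed base such that X ∉ 𝔅. If every 𝔅^s-cover of X contains a countable subfamily that is a γ_{𝔅^s}-cover of X, then X satisfies S₁(𝒪_{𝔅^s},Γ_{𝔅^s}). -/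
open Set Metric

variable {X : Type*} [MetricSpace X]

open Filter Topology

/-!
Pick a γ_{𝔅ˢ}-cover `w` inside `𝒰 0` and form the 𝔅ˢ-cover `𝒲` of all sets
`w m ∩ ⋂ i ≤ m, f i` with `f i ∈ 𝒰 i`. Apply the hypothesis to `𝒲` to get a γ_{𝔅ˢ}-cover
`z j = w (m j) ∩ ⋂ i ≤ m j, f j i`. Since every point lies in all but finitely many `z j`,
no `w m` can contain infinitely many of them, so `m j → ∞`; hence for every `n` some `z j`
with `j ≥ n` has an `n`-th factor `f j n ∈ 𝒰 n`, and these factors form the required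
γ_{𝔅ˢ}-cover.
-/

section Sets

variable {ι α : Type*}

theorem eq_univ_of_frequently_subset {l : Filter ι} {z : ι → Set α} {V : Set α}
    (hz : ∀ x, ∀ᶠ j in l, x ∈ z j) (h : ∃ᶠ j in l, z j ⊆ V) : V = univ :=
  eq_univ_of_forall fun x =>
    let ⟨_, hjV, hx⟩ := (h.and_eventually (hz x)).exists
    hjV hx

theorem infinite_range_of_eventually_mem {l : Filter ι} [l.NeBot] {u : ι → Set α}
    (hne : ∀ i, u i ≠ univ) (hmem : ∀ x, ∀ᶠ i in l, x ∈ u i) : (range u).Infinite := by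
  intro hfin
  have := hfin.to_subtype
  choose x hx using fun a : range u => (ne_univ_iff_exists_notMem (a : Set α)).1 <| by
    obtain ⟨i, hi⟩ := a.2
    exact hi ▸ hne i
  obtain ⟨i, hi⟩ := (eventually_all.2 fun a => hmem (x a)).exists
  exact hx ⟨u i, mem_range_self i⟩ (hi _)

theorem tendsto_atTop_of_subset_of_eventually_mem {z w : ℕ → Set α} {m : ℕ → ℕ}
    (hz : ∀ x, ∀ᶠ j in atTop, x ∈ z j) (hw : ∀ k, w k ≠ univ) (hzw : ∀ j, z j ⊆ w (m j)) :
    Tendsto m atTop atTop := by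
  have hfiber : ∀ k, ∀ᶠ j in atTop, m j ≠ k := fun k => by
    by_contra h
    refine hw k (eq_univ_of_frequently_subset hz ?_)
    exact (not_eventually.1 h).mono fun j hj => not_not.1 hj ▸ hzw j
  refine tendsto_atTop.2 fun b => ?_
  filter_upwards [(eventually_all_finset (Finset.range b)).2 fun k _ => hfiber k] with j hj
  by_contra hlt
  exact hj (m j) (Finset.mem_range.2 (not_le.1 hlt)) rfl

end Sets

theorem enl_mono {B : Set X} {a b : ℝ} (h : a ≤ b) : enl B a ⊆ enl B b :=
  iUnion₂_mono fun _ _ => ball_subset_ball h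

theorem subset_enl (B : Set X) {δ : ℝ} (h : 0 < δ) : B ⊆ enl B δ := fun _ hx =>
  mem_biUnion hx (mem_ball_self h)

theorem eventually_enl_subset {B U : Set X} (h : ∃ δ > 0, enl B δ ⊆ U) :
    ∀ᶠ δ in 𝓝[>] (0 : ℝ), enl B δ ⊆ U := by
  obtain ⟨δ, hδ, hU⟩ := h
  filter_upwards [Ioo_mem_nhdsGT hδ] with ε hε using (enl_mono hε.2.le).trans hU

theorem sUnion_eq_univ_of_absorbs {𝔅 𝒰 : Set (Set X)} (h𝔅 : ⋃₀ 𝔅 = univ)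
    (habs : ∀ B ∈ 𝔅, ∃ U ∈ 𝒰, ∃ δ > 0, enl B δ ⊆ U) : ⋃₀ 𝒰 = univ := by
  refine eq_univ_of_forall fun x => ?_
  obtain ⟨B, hB, hxB⟩ := sUnion_eq_univ_iff.1 h𝔅 x
  obtain ⟨U, hU, δ, hδ, hBU⟩ := habs B hB
  exact ⟨U, hU, hBU (subset_enl B hδ hxB)⟩

def EventuallyAbsorbs (𝔅 : Set (Set X)) (u : ℕ → Set X) : Prop :=
  ∀ B ∈ 𝔅, ∃ n₀ : ℕ, ∃ δ : ℕ → ℝ, ∀ n ≥ n₀, 0 < δ n ∧ enl B (δ n) ⊆ u n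

namespace EventuallyAbsorbs

variable {𝔅 : Set (Set X)} {u z : ℕ → Set X}

theorem eventually_mem (h : EventuallyAbsorbs 𝔅 u) (h𝔅 : ⋃₀ 𝔅 = univ) (x : X) :
    ∀ᶠ n in atTop, x ∈ u n := by
  obtain ⟨B, hB, hxB⟩ := sUnion_eq_univ_iff.1 h𝔅 x
  obtain ⟨n₀, δ, hδ⟩ := h B hB
  filter_upwards [eventually_ge_atTop n₀] with n hn
  exact (hδ n hn).2 (subset_enl B (hδ n hn).1 hxB)

theorem of_subset_comp (h : EventuallyAbsorbs 𝔅 z) {j : ℕ → ℕ} (hj : ∀ n, n ≤ j n)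
    (hzu : ∀ n, z (j n) ⊆ u n) : EventuallyAbsorbs 𝔅 u := by
  intro B hB
  obtain ⟨n₀, δ, hδ⟩ := h B hB
  refine ⟨n₀, δ ∘ j, fun n hn => ?_⟩
  obtain ⟨hpos, hsub⟩ := hδ (j n) (hn.trans (hj n))
  exact ⟨hpos, hsub.trans (hzu n)⟩

theorem isGammaCover (h : EventuallyAbsorbs 𝔅 u) (h𝔅 : ⋃₀ 𝔅 = univ)
    (hopen : ∀ n, IsOpen (u n)) (hne : ∀ n, u n ≠ univ) : IsGammaCover 𝔅 u :=
  ⟨hopen, iUnion_eq_univ_iff.2 fun x => (h.eventually_mem h𝔅 x).exists,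
    infinite_range_of_eventually_mem hne (h.eventually_mem h𝔅), h⟩

end EventuallyAbsorbs

theorem IsGammaCover.eventuallyAbsorbs {𝔅 : Set (Set X)} {u : ℕ → Set X}
    (h : IsGammaCover 𝔅 u) : EventuallyAbsorbs 𝔅 u :=
  h.2.2.2

def diagCover (w : ℕ → Set X) (𝒰 : ℕ → Set (Set X)) : Set (Set X) :=
  {W | ∃ m : ℕ, ∃ f : ℕ → Set X, (∀ i ≤ m, f i ∈ 𝒰 i) ∧ W = w m ∩ ⋂ i ≤ m, f i}

theorem isBsCover_diagCover {𝔅 : Set (Set X)} (h𝔅 : ⋃₀ 𝔅 = univ) {𝒰 : ℕ → Set (Set X)}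
    (h𝒰 : ∀ n, IsBsCover 𝔅 (𝒰 n)) {w : ℕ → Set X} (hw𝒰 : ∀ m, w m ∈ 𝒰 0)
    (hw : EventuallyAbsorbs 𝔅 w) : IsBsCover 𝔅 (diagCover w 𝒰) := by
  have habs : ∀ B ∈ 𝔅, ∃ W ∈ diagCover w 𝒰, ∃ δ > 0, enl B δ ⊆ W := by
    intro B hB
    obtain ⟨m, δw, hδw⟩ := hw B hB
    choose f hf hfB using fun i => (h𝒰 i).2.2.2 B hB
    obtain ⟨δ, ⟨hδw, hδf⟩, hδ⟩ := ((eventually_enl_subset ⟨_, hδw m le_rfl⟩).and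
      ((eventually_all_finite (finite_Iic m)).2 fun i _ => eventually_enl_subset (hfB i))).and
      eventually_mem_nhdsWithin |>.exists
    exact ⟨_, ⟨m, f, fun i _ => hf i, rfl⟩, δ, hδ, subset_inter hδw (subset_iInter₂ hδf)⟩
  refine ⟨?_, ?_, sUnion_eq_univ_of_absorbs h𝔅 habs, habs⟩
  · rintro _ ⟨m, f, hf, rfl⟩
    exact ((h𝒰 0).1 _ (hw𝒰 m)).inter
      ((finite_Iic m).isOpen_biInter fun i hi => (h𝒰 i).1 _ (hf i hi))
  · rintro ⟨m, f, -, hW⟩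
    exact (h𝒰 0).2.1 (univ_subset_iff.1 (hW ▸ inter_subset_left) ▸ hw𝒰 m)

theorem statement16_general (𝔅 : Set (Set X)) (h𝔅 : IsBorn 𝔅)
    (hsub : ∀ 𝒰 : Set (Set X), IsBsCover 𝔅 𝒰 →
      ∃ u : ℕ → Set X, (∀ n, u n ∈ 𝒰) ∧ IsGammaCover 𝔅 u) :
    ∀ 𝒰 : ℕ → Set (Set X), (∀ n, IsBsCover 𝔅 (𝒰 n)) →
      ∃ u : ℕ → Set X, (∀ n, u n ∈ 𝒰 n) ∧ IsGammaCover 𝔅 u := by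
  intro 𝒰 h𝒰
  have hcov : ⋃₀ 𝔅 = univ := h𝔅.2.1
  have hne : ∀ {n U}, U ∈ 𝒰 n → U ≠ univ := fun hU hEq => (h𝒰 _).2.1 (hEq ▸ hU)
  obtain ⟨w, hw𝒰, hw⟩ := hsub (𝒰 0) (h𝒰 0)
  obtain ⟨z, hz𝒲, hz⟩ := hsub _ (isBsCover_diagCover hcov h𝒰 hw𝒰 hw.eventuallyAbsorbs)
  choose m f hf hzeq using hz𝒲
  have hm : Tendsto m atTop atTop :=
    tendsto_atTop_of_subset_of_eventually_mem (hz.eventuallyAbsorbs.eventually_mem hcov)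
      (fun k => hne (hw𝒰 k)) fun j => (hzeq j).trans_subset inter_subset_left
  choose j hjn hmj using fun n => ((eventually_ge_atTop n).and (hm.eventually_ge_atTop n)).exists
  have hu𝒰 : ∀ n, f (j n) n ∈ 𝒰 n := fun n => hf _ _ (hmj n)
  refine ⟨fun n => f (j n) n, hu𝒰, ?_⟩
  refine EventuallyAbsorbs.isGammaCover ?_ hcov (fun n => (h𝒰 n).1 _ (hu𝒰 n)) fun n => hne (hu𝒰 n)
  refine hz.eventuallyAbsorbs.of_subset_comp hjn fun n => ?_
  rw [hzeq]
  exact inter_subset_right.trans (biInter_subset_of_mem (hmj n))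

theorem statement16 (𝔅 : Set (Set X)) (h𝔅 : IsBorn 𝔅) (hcb : HasClosedBase 𝔅)
    (hX : Set.univ ∉ 𝔅)
    (hsub : ∀ 𝒰 : Set (Set X), IsBsCover 𝔅 𝒰 →
      ∃ u : ℕ → Set X, (∀ n, u n ∈ 𝒰) ∧ IsGammaCover 𝔅 u) :
    ∀ 𝒰 : ℕ → Set (Set X), (∀ n, IsBsCover 𝔅 (𝒰 n)) →
      ∃ u : ℕ → Set X, (∀ n, u n ∈ 𝒰 n) ∧ IsGammaCover 𝔅 u :=
  statement16_general 𝔅 h𝔅 hsub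
end
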